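/- (Pieri-type formula) Let a = (a_k) with a_1 = 0 and let μ be a strict partition. Then P_{μ;a} · (p_1 − ∑_{j=1}^{ℓ(μ)} a_{μ_j+1}) = ∑_{λ: μ↗λ} P_{λ;a}, where p_1 = ∑_i x_i and the sum is over strict partitions λ with |λ| = |μ|+1 and μ ⊂ λ. -/

import Mathlib

/-
Write `P_{ν;a}`, for an arbitrary length `l` and row sequence `ν`, as `(n - l)!⁻¹` times the sum
over permutations `ω` of `∏_{i<l} ∏_{k<ν_i} (x_{ω i} - a_{k+1})` times the ratio product. Split
`p_1` into the variables `x_{ω i}`, `i < l`, and the remaining ones. The factor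
`x_{ω i} - a_{ν_i+1}` extends row `i` by one box. The remaining variables produce a new row of
length one (here `a_1 = 0` is used) through the identity
`∑_k y_k ∏_{j≠k} (y_k + y_j)/(y_k - y_j) = ∑_k y_k`, a consequence of Lagrange interpolation.
An extension that does not give a strict partition makes two consecutive rows equal, and the
antisymmetry of the ratio product under swapping them kills the term.
-/

noncomputable section

abbrev K (n : ℕ) : Type := FractionRing (MvPolynomial (Fin n) ℂ)

def Xv {n : ℕ} (i : Fin n) : K n :=
  algebraMap (MvPolynomial (Fin n) ℂ) (K n) (MvPolynomial.X i)

def Cv {n : ℕ} (c : ℂ) : K n :=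
  algebraMap (MvPolynomial (Fin n) ℂ) (K n) (MvPolynomial.C c)

/-- The product over pairs `i < j` with `i < l` of `(x i + x j)/(x i - x j)`. -/
def ratioProd {n : ℕ} (l : ℕ) (x : Fin n → K n) : K n :=
  ∏ p ∈ Finset.univ.filter (fun p : Fin n × Fin n => (p.1 : ℕ) < l ∧ p.1 < p.2),
    (x p.1 + x p.2) / (x p.1 - x p.2)

/-- A strict partition: strictly decreasing positive parts `parts 0 > parts 1 > ⋯`,
indexed from `0`, with `parts i = 0` for `i ≥ l`. -/
structure SPartition where
  l : ℕ
  parts : ℕ → ℕ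
  strict : ∀ i, i + 1 < l → parts (i + 1) < parts i
  pos : ∀ i, i < l → 0 < parts i
  zero : ∀ i, l ≤ i → parts i = 0

def SPartition.size (lam : SPartition) : ℕ := ∑ i ∈ Finset.range lam.l, lam.parts i

/-- The multiparameter Schur P-polynomial `P_{λ;a|n}`, as an element of the field of
rational functions in `n` variables (by convention `0` if `n < ℓ(λ)`). -/
def Pmulti (lam : SPartition) (a : ℕ → ℂ) (n : ℕ) : K n :=
  if hl : lam.l ≤ n then
    Cv (((n - lam.l).factorial : ℂ))⁻¹ *
      ∑ ω : Equiv.Perm (Fin n),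
        (∏ i : Fin lam.l,
            ∏ k ∈ Finset.range (lam.parts i.1),
              (Xv (ω (Fin.castLE hl i)) - Cv (a (k + 1)))) *
          ratioProd lam.l (fun j => Xv (ω j))
  else 0


/-- `λ` covers `μ` in the Schur graph: `μ ⊂ λ` and `|λ| = |μ| + 1`. -/
def Covers (mu lam : SPartition) : Prop :=
  (∀ i, mu.parts i ≤ lam.parts i) ∧ lam.size = mu.size + 1

open Finset Polynomial Equiv

lemma Xv_injective {n : ℕ} : Function.Injective (Xv (n := n)) :=
  (IsFractionRing.injective (MvPolynomial (Fin n) ℂ) (K n)).comp MvPolynomial.X_injective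

section RatioTerm

variable {F ι : Type*} [Field F] [DecidableEq ι]

def ratioTerm (s : Finset ι) (y : ι → F) (k : ι) : F :=
  y k * ∏ j ∈ s.erase k, (y k + y j) / (y k - y j)

lemma ratioTerm_comp_swap {s : Finset ι} (y : ι → F) {k k' : ι} (hk : k ∈ s) (hk' : k' ∈ s) :
    ratioTerm s (fun j => y (swap k k' j)) k = ratioTerm s y k' := by
  unfold ratioTerm
  simp only [swap_apply_left]
  congr 1
  refine prod_equiv (swap k k') (fun j => ?_) fun _ _ => rfl
  rcases eq_or_ne j k with rfl | hjk
  · simp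
  rcases eq_or_ne j k' with rfl | hjk'
  · simp [hk, hk', hjk, hjk.symm]
  · simp [swap_apply_of_ne_of_ne hjk hjk', hjk, hjk']

theorem sum_ratioTerm [NeZero (2 : F)] (s : Finset ι) {y : ι → F} (hy : Set.InjOn y s) :
    ∑ k ∈ s, ratioTerm s y k = ∑ k ∈ s, y k := by
  rcases s.eq_empty_or_nonempty with rfl | hs
  · simp
  -- `P = ∏ (X + y j) - ∏ (X - y j)` has degree `< #s`: read its coefficient of `X ^ (#s - 1)`
  -- off the Lagrange formula
  set P : F[X] := Lagrange.nodal s (-y) - Lagrange.nodal s y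
  have hdeg : P.degree < #s := by
    have h := degree_sub_lt_left (p := Lagrange.nodal s (-y)) (q := Lagrange.nodal s y)
      (by rw [Lagrange.degree_nodal, Lagrange.degree_nodal]) Lagrange.nodal_ne_zero
      (by rw [Lagrange.nodal_monic.leadingCoeff, Lagrange.nodal_monic.leadingCoeff])
    rwa [Lagrange.degree_nodal] at h
  have hcoeff : P.coeff (#s - 1) = 2 * ∑ k ∈ s, y k := by
    rw [coeff_sub, Lagrange.nodal_eq, Lagrange.nodal_eq,
      prod_X_sub_C_coeff_card_pred _ _ hs.card_pos, prod_X_sub_C_coeff_card_pred _ _ hs.card_pos]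
    simp only [Pi.neg_apply, sum_neg_distrib]
    ring
  have heval : ∀ k ∈ s, P.eval (y k) = 2 * (y k * ∏ j ∈ s.erase k, (y k + y j)) := by
    intro k hk
    rw [eval_sub, Lagrange.eval_nodal_at_node hk, sub_zero, Lagrange.eval_nodal,
      ← mul_prod_erase s _ hk]
    simp only [Pi.neg_apply, sub_neg_eq_add]
    ring
  rw [← mul_right_inj' (two_ne_zero (α := F)), ← hcoeff, Lagrange.coeff_eq_sum hy hdeg, mul_sum]
  refine sum_congr rfl fun k hk => ?_
  rw [ratioTerm, heval k hk, prod_div_distrib]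
  ring

end RatioTerm

def tailSet (n l : ℕ) : Finset (Fin n) := univ.filter fun j => l ≤ (j : ℕ)

lemma tailSet_erase {n l : ℕ} (hl : l < n) :
    (tailSet n l).erase ⟨l, hl⟩ = tailSet n (l + 1) := by
  ext j
  simp only [tailSet, mem_erase, mem_filter, mem_univ, true_and, ne_eq, Fin.ext_iff]
  omega

lemma card_tailSet (n l : ℕ) : #(tailSet n l) = n - l := by
  have h := card_filter_add_card_filter_not (s := univ) fun j : Fin n => (j : ℕ) < l
  simp only [not_lt, card_univ, Fintype.card_fin, Fin.card_filter_val_lt] at h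
  rw [tailSet]
  omega

lemma tailSet_eq_empty {n l : ℕ} (hl : n ≤ l) : tailSet n l = ∅ :=
  filter_false_of_mem fun j _ => by have := j.2; omega

lemma sum_univ_eq_sum_castLE_add_sum_tailSet {M : Type*} [AddCommMonoid M] {n l : ℕ}
    (hl : l ≤ n) (f : Fin n → M) :
    ∑ j, f j = ∑ i : Fin l, f (Fin.castLE hl i) + ∑ j ∈ tailSet n l, f j := by
  rw [← sum_filter_add_sum_filter_not univ (fun j : Fin n => (j : ℕ) < l)]
  congr 1
  · refine sum_bij' (fun j hj => ⟨j, by simpa using hj⟩) (fun i _ => Fin.castLE hl i)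
      ?_ ?_ ?_ ?_ ?_ <;> simp
  · simp [tailSet]

lemma ratioProd_comp_of_forall_lt_eq {n l : ℕ} (x : Fin n → K n) {τ : Perm (Fin n)}
    (hτ : ∀ i : Fin n, (i : ℕ) < l → τ i = i) :
    ratioProd l (fun j => x (τ j)) = ratioProd l x := by
  have hge : ∀ j : Fin n, l ≤ (j : ℕ) → l ≤ (τ j : ℕ) := fun j hj => by
    by_contra! h
    have := τ.injective (hτ _ h)
    omega
  refine prod_equiv ((Equiv.refl _).prodCongr τ) (fun p => ?_) (fun p hp => ?_)
  · simp only [mem_filter, mem_univ, true_and, Fin.lt_def, prodCongr_apply, Prod.map, coe_refl,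
      id]
    rcases lt_or_ge (p.2 : ℕ) l with h | h
    · rw [hτ p.2 h]
    · have := hge p.2 h
      omega
  · simp only [mem_filter, mem_univ, true_and] at hp
    simp [hτ p.1 hp.1]

lemma ratioProd_comp_swap {n l q : ℕ} (x : Fin n → K n) (hq : q + 1 < l) (hl : l ≤ n) :
    ratioProd l (fun j => x (swap ⟨q, by omega⟩ ⟨q + 1, by omega⟩ j)) = -ratioProd l x := by
  set u : Fin n := ⟨q, by omega⟩
  set v : Fin n := ⟨q + 1, by omega⟩
  set S := univ.filter fun p : Fin n × Fin n => (p.1 : ℕ) < l ∧ p.1 < p.2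
  have huv : (u, v) ∈ S := by
    simp only [S, u, v, mem_filter, mem_univ, true_and, Fin.mk_lt_mk]
    omega
  have hmaps : ∀ p ∈ S.erase (u, v), (swap u v p.1, swap u v p.2) ∈ S.erase (u, v) := by
    rintro ⟨i, j⟩ hp
    simp only [S, u, v, mem_erase, mem_filter, mem_univ, true_and, ne_eq, Prod.mk.injEq,
      Fin.lt_def, Fin.ext_iff, swap_apply_def] at hp ⊢
    split_ifs <;> simp_all <;> omega
  have hrest : ∏ p ∈ S.erase (u, v), (x (swap u v p.1) + x (swap u v p.2)) /
        (x (swap u v p.1) - x (swap u v p.2)) =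
      ∏ p ∈ S.erase (u, v), (x p.1 + x p.2) / (x p.1 - x p.2) :=
    prod_nbij' _ _ hmaps hmaps (by simp) (by simp) fun _ _ => rfl
  unfold ratioProd
  rw [← mul_prod_erase _ _ huv, ← mul_prod_erase _ _ huv, hrest]
  dsimp only
  rw [swap_apply_left, swap_apply_right, add_comm, ← neg_sub (x u), ← neg_mul]
  exact congrArg (· * _) (div_neg _)

lemma ratioProd_succ {n l : ℕ} (x : Fin n → K n) (hl : l < n) :
    ratioProd (l + 1) x =
      ratioProd l x * ∏ j ∈ tailSet n (l + 1), (x ⟨l, hl⟩ + x j) / (x ⟨l, hl⟩ - x j) := by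
  unfold ratioProd
  set S := univ.filter fun p : Fin n × Fin n => (p.1 : ℕ) < l + 1 ∧ p.1 < p.2
  rw [← prod_filter_mul_prod_filter_not S fun p => (p.1 : ℕ) < l]
  congr 1
  · congr 1
    ext p
    simp only [S, mem_filter, mem_univ, true_and]
    omega
  · have hrow : ∀ p, p ∈ S.filter (fun p => ¬(p.1 : ℕ) < l) ↔
        p.1 = ⟨l, hl⟩ ∧ l + 1 ≤ (p.2 : ℕ) := by
      intro p
      simp only [S, mem_filter, mem_univ, true_and, Fin.lt_def, Fin.ext_iff]
      omega
    refine prod_nbij' (·.2) (fun j => (⟨l, hl⟩, j)) (fun p hp => ?_) (fun j hj => ?_)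
      (fun p hp => ?_) (fun _ _ => rfl) (fun p hp => ?_)
    · simp only [tailSet, mem_filter, mem_univ, true_and]
      exact ((hrow p).1 hp).2
    · simp only [tailSet, mem_filter, mem_univ, true_and] at hj
      exact (hrow (⟨l, hl⟩, j)).2 ⟨rfl, hj⟩
    · rw [← ((hrow p).1 hp).1]
    · rw [((hrow p).1 hp).1]

section Symmetrization

variable (a : ℕ → ℂ) {n l : ℕ}

def rowProd (hl : l ≤ n) (ν : ℕ → ℕ) (x : Fin n → K n) : K n :=
  ∏ i : Fin l, ∏ k ∈ range (ν i), (x (Fin.castLE hl i) - Cv (a (k + 1)))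

def symTerm (hl : l ≤ n) (ν : ℕ → ℕ) (x : Fin n → K n) : K n :=
  rowProd a hl ν x * ratioProd l x

def symSum (hl : l ≤ n) (ν : ℕ → ℕ) : K n :=
  ∑ ω : Perm (Fin n), symTerm a hl ν fun j => Xv (ω j)

def tailSum (hl : l ≤ n) (ν : ℕ → ℕ) : K n :=
  ∑ ω : Perm (Fin n), symTerm a hl ν (fun j => Xv (ω j)) * ∑ j ∈ tailSet n l, Xv (ω j)

variable {a}

lemma rowProd_comp_of_forall_lt_eq (hl : l ≤ n) (ν : ℕ → ℕ) (x : Fin n → K n)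
    {τ : Perm (Fin n)} (hτ : ∀ i : Fin n, (i : ℕ) < l → τ i = i) :
    rowProd a hl ν (fun j => x (τ j)) = rowProd a hl ν x :=
  prod_congr rfl fun i _ => by beta_reduce; rw [hτ _ i.2]

lemma rowProd_comp_swap_of_eq (hl : l ≤ n) {ν : ℕ → ℕ} (x : Fin n → K n) {q : ℕ}
    (hq : q + 1 < l) (hν : ν (q + 1) = ν q) :
    rowProd a hl ν (fun j => x (swap ⟨q, by omega⟩ ⟨q + 1, by omega⟩ j)) =
      rowProd a hl ν x := by
  set σ : Perm (Fin l) := swap ⟨q, by omega⟩ ⟨q + 1, hq⟩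
  have hνσ : ∀ i : Fin l, ν (σ i) = ν i := fun i => by
    simp only [σ, swap_apply_def]
    split_ifs <;> subst_vars <;> simp [hν]
  unfold rowProd
  conv_rhs => rw [← Equiv.prod_comp σ]
  refine prod_congr rfl fun i _ => ?_
  rw [hνσ, ← (Fin.castLE_injective hl).swap_apply]
  rfl

lemma rowProd_update (hl : l ≤ n) (ν : ℕ → ℕ) (x : Fin n → K n) (i₀ : Fin l) :
    rowProd a hl (Function.update ν i₀ (ν i₀ + 1)) x =
      rowProd a hl ν x * (x (Fin.castLE hl i₀) - Cv (a (ν i₀ + 1))) := by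
  unfold rowProd
  rw [← mul_prod_erase _ _ (mem_univ i₀), ← mul_prod_erase _ _ (mem_univ i₀),
    Function.update_self, prod_range_succ, mul_right_comm]
  congr 2
  refine prod_congr rfl fun i hi => ?_
  rw [Function.update_of_ne (Fin.val_injective.ne (ne_of_mem_erase hi))]

lemma rowProd_update_self (hl : l + 1 ≤ n) (ν : ℕ → ℕ) (x : Fin n → K n) (m : ℕ) :
    rowProd a hl (Function.update ν l m) x =
      rowProd a (l.le_succ.trans hl) ν x * ∏ k ∈ range m, (x ⟨l, hl⟩ - Cv (a (k + 1))) := by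
  unfold rowProd
  rw [Fin.prod_univ_castSucc]
  congr 1
  · refine prod_congr rfl fun i _ => ?_
    rw [Fin.val_castSucc, Function.update_of_ne i.2.ne]
    rfl
  · rw [Fin.val_last, Function.update_self]
    rfl

lemma symTerm_comp_of_forall_lt_eq (hl : l ≤ n) (ν : ℕ → ℕ) (x : Fin n → K n)
    {τ : Perm (Fin n)} (hτ : ∀ i : Fin n, (i : ℕ) < l → τ i = i) :
    symTerm a hl ν (fun j => x (τ j)) = symTerm a hl ν x := by
  rw [symTerm, symTerm, rowProd_comp_of_forall_lt_eq hl ν x hτ,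
    ratioProd_comp_of_forall_lt_eq x hτ]

lemma symSum_eq_zero_of_eq (hl : l ≤ n) {ν : ℕ → ℕ} {q : ℕ} (hq : q + 1 < l)
    (hν : ν (q + 1) = ν q) : symSum a hl ν = 0 := by
  set τ : Perm (Fin n) := swap ⟨q, by omega⟩ ⟨q + 1, by omega⟩
  have hanti : ∀ ω : Perm (Fin n),
      symTerm a hl ν (fun j => Xv ((ω * τ) j)) = -symTerm a hl ν fun j => Xv (ω j) := by
    intro ω
    have hrow : rowProd a hl ν (fun j => Xv ((ω * τ) j)) = rowProd a hl ν fun j => Xv (ω j) :=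
      rowProd_comp_swap_of_eq hl (fun j => Xv (ω j)) hq hν
    have hratio : ratioProd l (fun j => Xv ((ω * τ) j)) = -ratioProd l fun j => Xv (ω j) :=
      ratioProd_comp_swap (fun j => Xv (ω j)) hq hl
    rw [symTerm, symTerm, hrow, hratio, mul_neg]
  refine CharZero.eq_neg_self_iff.mp ?_
  calc symSum a hl ν = ∑ ω, symTerm a hl ν fun j => Xv ((ω * τ) j) :=
        (Equiv.sum_comp (Equiv.mulRight τ) _).symm
    _ = -symSum a hl ν := by
        rw [symSum, ← sum_neg_distrib]
        exact sum_congr rfl fun ω _ => hanti ω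

lemma symSum_mul_sub (hl : l ≤ n) (ν : ℕ → ℕ) :
    symSum a hl ν * (∑ i, Xv i - Cv (∑ j ∈ range l, a (ν j + 1))) =
      ∑ i : Fin l, symSum a hl (Function.update ν i (ν i + 1)) + tailSum a hl ν := by
  simp only [symSum, tailSum, sum_mul]
  rw [sum_comm, ← sum_add_distrib]
  refine sum_congr rfl fun ω _ => ?_
  have hsplit : ∑ i, Xv i - Cv (∑ j ∈ range l, a (ν j + 1)) =
      ∑ i : Fin l, (Xv (ω (Fin.castLE hl i)) - Cv (a (ν i + 1))) +
        ∑ j ∈ tailSet n l, Xv (ω j) := by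
    rw [← Equiv.sum_comp ω, sum_univ_eq_sum_castLE_add_sum_tailSet hl,
      ← Fin.sum_univ_eq_sum_range, sum_sub_distrib]
    simp only [Cv, map_sum]
    ring
  rw [hsplit, mul_add, mul_sum]
  congr 1
  refine sum_congr rfl fun i _ => ?_
  rw [symTerm, symTerm, rowProd_update]
  ring

-- `swap k k'` fixes the first `l` positions, so it only moves the distinguished tail variable
lemma sum_symTerm_mul_ratioTerm_swap (hl : l ≤ n) (ν : ℕ → ℕ) {k k' : Fin n}
    (hk : k ∈ tailSet n l) (hk' : k' ∈ tailSet n l) :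
    ∑ ω : Perm (Fin n), symTerm a hl ν (fun j => Xv (ω j)) *
        ratioTerm (tailSet n l) (fun j => Xv (ω j)) k =
      ∑ ω : Perm (Fin n), symTerm a hl ν (fun j => Xv (ω j)) *
        ratioTerm (tailSet n l) (fun j => Xv (ω j)) k' := by
  have hfix : ∀ i : Fin n, (i : ℕ) < l → swap k k' i = i := fun i hi => by
    simp only [tailSet, mem_filter, mem_univ, true_and] at hk hk'
    exact swap_apply_of_ne_of_ne (fun h => by rw [h] at hi; omega)
      (fun h => by rw [h] at hi; omega)
  rw [← Equiv.sum_comp (Equiv.mulRight (swap k k'))]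
  refine sum_congr rfl fun ω _ => ?_
  congr 1
  · exact symTerm_comp_of_forall_lt_eq hl ν (fun j => Xv (ω j)) hfix
  · exact ratioTerm_comp_swap (fun j => Xv (ω j)) hk hk'

lemma natCast_mul_symSum_update_self (ha : a 1 = 0) (hl : l + 1 ≤ n) (ν : ℕ → ℕ) :
    ((n - l : ℕ) : K n) * symSum a hl (Function.update ν l 1) =
      tailSum a (l.le_succ.trans hl) ν := by
  set hl' := l.le_succ.trans hl
  set fl : Fin n := ⟨l, hl⟩
  have hfl : fl ∈ tailSet n l := by simp [tailSet, fl]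
  have hrow : ∀ ω : Perm (Fin n), symTerm a hl (Function.update ν l 1) (fun j => Xv (ω j)) =
      symTerm a hl' ν (fun j => Xv (ω j)) * ratioTerm (tailSet n l) (fun j => Xv (ω j)) fl := by
    intro ω
    rw [symTerm, symTerm, rowProd_update_self, ratioProd_succ _ hl, ratioTerm, tailSet_erase hl,
      prod_range_one, zero_add, ha, Cv, map_zero, map_zero, sub_zero]
    ring
  calc ((n - l : ℕ) : K n) * symSum a hl (Function.update ν l 1)
      = ∑ k ∈ tailSet n l, ∑ ω : Perm (Fin n), symTerm a hl' ν (fun j => Xv (ω j)) *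
          ratioTerm (tailSet n l) (fun j => Xv (ω j)) fl := by
        rw [sum_const, card_tailSet, nsmul_eq_mul, symSum]
        simp only [hrow]
    _ = ∑ k ∈ tailSet n l, ∑ ω : Perm (Fin n), symTerm a hl' ν (fun j => Xv (ω j)) *
          ratioTerm (tailSet n l) (fun j => Xv (ω j)) k :=
        sum_congr rfl fun k hk => sum_symTerm_mul_ratioTerm_swap hl' ν hfl hk
    _ = tailSum a hl' ν := by
        rw [sum_comm, tailSum]
        refine sum_congr rfl fun ω _ => ?_
        rw [← mul_sum, sum_ratioTerm]
        exact fun i _ j _ h => ω.injective (Xv_injective h)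

end Symmetrization

def PmultiSeq (a : ℕ → ℂ) (n l : ℕ) (ν : ℕ → ℕ) : K n :=
  if hl : l ≤ n then Cv (((n - l).factorial : ℂ))⁻¹ * symSum a hl ν else 0

lemma Pmulti_eq_PmultiSeq (lam : SPartition) (a : ℕ → ℂ) (n : ℕ) :
    Pmulti lam a n = PmultiSeq a n lam.l lam.parts :=
  rfl

section PmultiSeq

variable {a : ℕ → ℂ} {n l : ℕ}

lemma PmultiSeq_eq_zero_of_eq {ν : ℕ → ℕ} {q : ℕ} (hq : q + 1 < l) (hν : ν (q + 1) = ν q) :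
    PmultiSeq a n l ν = 0 := by
  unfold PmultiSeq
  split_ifs with hl
  · rw [symSum_eq_zero_of_eq hl hq hν, mul_zero]
  · rfl

lemma Cv_factorial_inv_mul_tailSum (ha : a 1 = 0) (hl : l ≤ n) (ν : ℕ → ℕ) :
    Cv (((n - l).factorial : ℂ))⁻¹ * tailSum a hl ν =
      PmultiSeq a n (l + 1) (Function.update ν l 1) := by
  rcases hl.eq_or_lt with rfl | hlt
  · simp [tailSum, tailSet_eq_empty le_rfl, PmultiSeq]
  obtain ⟨m, hm⟩ : ∃ m, n - l = m + 1 := ⟨n - l - 1, by omega⟩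
  have hfac : Cv (((n - l).factorial : ℂ))⁻¹ * ((n - l : ℕ) : K n) =
      Cv (((n - (l + 1)).factorial : ℂ))⁻¹ := by
    rw [show n - (l + 1) = m by omega, hm, Nat.factorial_succ, Cv, Cv,
      ← map_natCast (algebraMap (MvPolynomial (Fin n) ℂ) (K n)), ← map_natCast MvPolynomial.C,
      ← map_mul, ← map_mul]
    congr 2
    push_cast
    field_simp
  rw [PmultiSeq, dif_pos (show l + 1 ≤ n from hlt), ← natCast_mul_symSum_update_self ha hlt,
    ← mul_assoc, hfac]

theorem PmultiSeq_mul_sub (ha : a 1 = 0) {ν : ℕ → ℕ} (hν : ν l = 0) :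
    PmultiSeq a n l ν * (∑ i, Xv i - Cv (∑ j ∈ range l, a (ν j + 1))) =
      ∑ i ∈ range (l + 1), PmultiSeq a n (max l (i + 1)) (Function.update ν i (ν i + 1)) := by
  rw [sum_range_succ, max_eq_right l.le_succ, hν, zero_add]
  by_cases hl : l ≤ n
  · rw [PmultiSeq, dif_pos hl, mul_assoc, symSum_mul_sub, mul_add, mul_sum,
      Cv_factorial_inv_mul_tailSum ha hl, ← Fin.sum_univ_eq_sum_range]
    congr 1
    refine sum_congr rfl fun i _ => ?_
    rw [max_eq_left i.2, PmultiSeq, dif_pos hl]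
  · rw [PmultiSeq, dif_neg hl, zero_mul, PmultiSeq, dif_neg (by omega), add_zero]
    exact (sum_eq_zero fun i _ => dif_neg (by omega)).symm

end PmultiSeq

lemma exists_eq_update_succ_of_sum_eq_add_one {ι : Type*} [DecidableEq ι] {s : Finset ι}
    {f g : ι → ℕ} (hle : ∀ j, f j ≤ g j) (hout : ∀ j ∉ s, g j = f j)
    (hsum : ∑ j ∈ s, g j = ∑ j ∈ s, f j + 1) : ∃ i ∈ s, g = Function.update f i (f i + 1) := by
  have hd : ∑ j ∈ s, (g j - f j) = 1 := by
    rw [sum_tsub_distrib s fun j _ => hle j]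
    omega
  obtain ⟨i, hi, hi0⟩ := exists_ne_zero_of_sum_ne_zero (hd ▸ one_ne_zero)
  have hsplit := add_sum_erase s (fun j => g j - f j) hi
  have hrest : ∀ j ∈ s.erase i, g j - f j = 0 := sum_eq_zero_iff.mp (by omega)
  refine ⟨i, hi, funext fun j => ?_⟩
  rcases eq_or_ne j i with rfl | hji
  · rw [Function.update_self]
    have := hle j
    omega
  · rw [Function.update_of_ne hji]
    by_cases hj : j ∈ s
    · have := hrest j (mem_erase.mpr ⟨hji, hj⟩)
      have := hle j
      omega
    · exact hout j hj

namespace SPartition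

lemma ext {p q : SPartition} (hl : p.l = q.l) (hparts : p.parts = q.parts) : p = q := by
  cases p
  cases q
  cases hl
  cases hparts
  rfl

lemma size_eq_sum_range (p : SPartition) {m : ℕ} (hm : p.l ≤ m) :
    p.size = ∑ j ∈ range m, p.parts j :=
  sum_subset (range_subset_range.mpr hm) fun j _ hj => p.zero j (by simpa using hj)

lemma l_le_of_covers {mu lam : SPartition} (h : Covers mu lam) : mu.l ≤ lam.l := by
  by_contra! hlt
  have := mu.pos lam.l hlt
  have := lam.zero lam.l le_rfl
  have := h.1 lam.l
  omega

def CanAdd (mu : SPartition) (i : ℕ) : Prop :=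
  i ≤ mu.l ∧ (i = 0 ∨ mu.parts i + 1 < mu.parts (i - 1))

instance (mu : SPartition) : DecidablePred mu.CanAdd :=
  fun _ => inferInstanceAs (Decidable (_ ∧ _))

def addBox (mu : SPartition) (i : ℕ) : SPartition :=
  if h : mu.CanAdd i then
    { l := max mu.l (i + 1)
      parts := Function.update mu.parts i (mu.parts i + 1)
      strict := fun j hj => by
        have := h.1
        rw [lt_max_iff] at hj
        simp only [Function.update_apply]
        split_ifs with h1 h2 h2
        · omega
        · subst h1
          simpa using h.2.resolve_left (by omega)
        · subst h2
          have := mu.strict j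
          have := mu.zero (j + 1)
          omega
        · exact mu.strict j (by omega)
      pos := fun j hj => by
        have := h.1
        rw [lt_max_iff] at hj
        simp only [Function.update_apply]
        split_ifs with h1
        · omega
        · exact mu.pos j (by omega)
      zero := fun j hj => by
        rw [max_le_iff] at hj
        rw [Function.update_of_ne (by omega)]
        exact mu.zero j hj.1 }
  else mu

variable {mu : SPartition} {i : ℕ}

lemma addBox_l (h : mu.CanAdd i) : (mu.addBox i).l = max mu.l (i + 1) := by
  rw [addBox, dif_pos h]

lemma addBox_parts (h : mu.CanAdd i) :
    (mu.addBox i).parts = Function.update mu.parts i (mu.parts i + 1) := by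
  rw [addBox, dif_pos h]

lemma covers_addBox (h : mu.CanAdd i) : Covers mu (mu.addBox i) := by
  have hi : i ∈ range (max mu.l (i + 1)) := by simp
  refine ⟨fun j => ?_, ?_⟩
  · rw [addBox_parts h, Function.update_apply]
    split_ifs with hj
    · subst hj
      omega
    · rfl
  · rw [size, addBox_l h, addBox_parts h, sum_update_of_mem hi,
      mu.size_eq_sum_range (le_max_left _ _), ← add_sum_erase _ _ hi, sdiff_singleton_eq_erase]
    ring

lemma eq_addBox_of_covers {lam : SPartition} (h : Covers mu lam) :
    ∃ i, mu.CanAdd i ∧ lam = mu.addBox i := by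
  have hl := l_le_of_covers h
  obtain ⟨i, hi, hparts⟩ := exists_eq_update_succ_of_sum_eq_add_one (s := range lam.l) h.1
    (fun j hj => by
      rw [mem_range, not_lt] at hj
      rw [lam.zero j hj, mu.zero j (hl.trans hj)])
    (by rw [← size, h.2, mu.size_eq_sum_range hl])
  have hval : ∀ j, lam.parts j = if j = i then mu.parts i + 1 else mu.parts j := fun j => by
    rw [hparts, Function.update_apply]
  rw [mem_range] at hi
  have hcan : mu.CanAdd i := by
    refine ⟨?_, or_iff_not_imp_left.mpr fun hi0 => ?_⟩
    · by_contra! hil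
      have := lam.pos (i - 1) (by omega)
      have := hval (i - 1)
      have := mu.zero (i - 1) (by omega)
      split_ifs at * <;> omega
    · have := lam.strict (i - 1) (by omega)
      have := hval (i - 1)
      rw [Nat.sub_add_cancel (by omega), hval i] at *
      split_ifs at * <;> omega
  refine ⟨i, hcan, ext ?_ (by rw [addBox_parts hcan, hparts])⟩
  rw [addBox_l hcan]
  by_contra! hne
  have := lam.pos (lam.l - 1) (by omega)
  have := hval (lam.l - 1)
  have := mu.zero (lam.l - 1) (by omega)
  split_ifs at * <;> omega

lemma addBox_injOn : Set.InjOn mu.addBox {i | mu.CanAdd i} := by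
  intro i hi j hj hij
  by_contra hne
  have := congrFun (congrArg parts hij) i
  rw [addBox_parts hi, addBox_parts hj, Function.update_self, Function.update_of_ne hne] at this
  omega

lemma finsum_covers {M : Type*} [AddCommMonoid M] (mu : SPartition) (f : SPartition → M) :
    ∑ᶠ (lam : SPartition) (_ : Covers mu lam), f lam =
      ∑ i ∈ (range (mu.l + 1)).filter mu.CanAdd, f (mu.addBox i) := by
  classical
  have hset : {lam | Covers mu lam} =
      ↑(((range (mu.l + 1)).filter mu.CanAdd).image mu.addBox) := by
    ext lam
    simp only [Set.mem_ofPred_eq, coe_image, coe_filter, mem_range, Set.mem_image]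
    constructor
    · intro h
      obtain ⟨i, hi, rfl⟩ := eq_addBox_of_covers h
      exact ⟨i, ⟨Nat.lt_succ_of_le hi.1, hi⟩, rfl⟩
    · rintro ⟨i, ⟨-, hi⟩, rfl⟩
      exact covers_addBox hi
  rw [← sum_image (s := (range (mu.l + 1)).filter mu.CanAdd) fun i hi j hj =>
      addBox_injOn (mem_filter.mp hi).2 (mem_filter.mp hj).2,
    ← finsum_mem_coe_finset, ← hset]
  rfl

lemma PmultiSeq_eq_zero_of_not_canAdd {a : ℕ → ℂ} {n : ℕ} (hi : i ≤ mu.l)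
    (h : ¬mu.CanAdd i) :
    PmultiSeq a n (max mu.l (i + 1)) (Function.update mu.parts i (mu.parts i + 1)) = 0 := by
  have hi0 : i ≠ 0 := fun h0 => h ⟨hi, Or.inl h0⟩
  have hle : mu.parts (i - 1) ≤ mu.parts i + 1 := not_lt.mp fun hlt => h ⟨hi, Or.inr hlt⟩
  have hgt : mu.parts i < mu.parts (i - 1) := by
    rcases hi.lt_or_eq with hlt | rfl
    · simpa [Nat.sub_add_cancel (Nat.pos_of_ne_zero hi0)] using mu.strict (i - 1) (by omega)
    · rw [mu.zero _ le_rfl]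
      exact mu.pos _ (by omega)
  refine PmultiSeq_eq_zero_of_eq (q := i - 1) (by omega) ?_
  rw [Nat.sub_add_cancel (by omega), Function.update_self, Function.update_of_ne (by omega)]
  omega

end SPartition

/-- Pieri-type formula: `P_{μ;a} · (p_1 − ∑_j a_{μ_j+1}) = ∑_{λ : μ↗λ} P_{λ;a}`,
as an identity of supersymmetric functions, i.e. in every number `n` of variables. -/
theorem Pmulti_pieri (a : ℕ → ℂ) (ha : a 1 = 0) (mu : SPartition) (n : ℕ) :
    Pmulti mu a n *
        ((∑ i : Fin n, Xv i) - Cv (∑ j ∈ Finset.range mu.l, a (mu.parts j + 1)))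
      = ∑ᶠ (lam : SPartition) (_ : Covers mu lam), Pmulti lam a n := by
  rw [SPartition.finsum_covers, Pmulti_eq_PmultiSeq, PmultiSeq_mul_sub ha (mu.zero _ le_rfl),
    sum_filter]
  refine sum_congr rfl fun i hi => ?_
  split_ifs with h
  · rw [Pmulti_eq_PmultiSeq, SPartition.addBox_l h, SPartition.addBox_parts h]
  · exact SPartition.PmultiSeq_eq_zero_of_not_canAdd (mem_range_succ_iff.mp hi) h

end
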